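/- The big-step semantics is deterministic given the trace: if ρ ⊢ t ⇓(u₁, s, w₁) v₁ and ρ ⊢ t ⇓(u₂, s, w₂) v₂ with the same environment, term, and trace s, then u₁ = u₂, w₁ = w₂, and v₁ = v₂. -/
import Mathlib


/-- Terms of the untyped PPL lambda calculus with constants from `C`. -/
inductive Tm (C : Type) : Type where
  | var : String → Tm C
  | const : C → Tm C
  | lam : String → Tm C → Tm C
  | app : Tm C → Tm C → Tm C
  | letin : String → Tm C → Tm C → Tm C
  | ite : Tm C → Tm C → Tm C → Tm C
  | assume : Tm C → Tm C
  | weight : Tm C → Tm C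

/-- Values: constants and closures (with environments as association lists). -/
inductive Val (C : Type) : Type where
  | const : C → Val C
  | clos : String → Tm C → List (String × Val C) → Val C

abbrev Env (C : Type) := List (String × Val C)

def lookupEnv {C : Type} : Env C → String → Option (Val C)
  | [], _ => none
  | (y, v) :: ρ, x => if x = y then some v else lookupEnv ρ x

/-- Interpretation of intrinsic constants: partial application function `delta`,
boolean interpretation `truth`, real interpretation `toReal`, densities of
distributions `dens`, and a unit constant. -/
structure Sem (C : Type) where
  delta : C → C → Option C
  truth : C → Option Bool
  toReal : C → Option ℝ
  dens : C → C → Option ℝ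
  unit : C

/-- Big-step semantics `ρ ⊢ t ⇓(u, s, w) v` of Figure 2, parameterized by the
suspension sources `sa = suspend_assume` and `sw = suspend_weight`.  Besides the
suspension flag `u`, the trace `s` and the accumulated weight `w`, the judgment
also records the list `d` of densities contributed by applications of the
(Assume) rule (one entry per application of (Assume), in order) and the list
`m` of weight arguments contributed by applications of the (Weight) rule
(one entry per application of (Weight)). -/
inductive Ev {C : Type} (σ : Sem C) (sa sw : Bool) :
    Env C → Tm C → Bool → List C → List ℝ → List ℝ → ℝ → Val C → Prop where
  | var {ρ x v} :
      lookupEnv ρ x = some v →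
      Ev σ sa sw ρ (.var x) false [] [] [] 1 v
  | const {ρ c} :
      Ev σ sa sw ρ (.const c) false [] [] [] 1 (.const c)
  | lam {ρ x t} :
      Ev σ sa sw ρ (.lam x t) false [] [] [] 1 (.clos x t ρ)
  | app {ρ t1 t2 t x ρ' u1 u2 u3 s1 s2 s3 d1 d2 d3 m1 m2 m3 w1 w2 w3 v2 v} :
      Ev σ sa sw ρ t1 u1 s1 d1 m1 w1 (.clos x t ρ') →
      Ev σ sa sw ρ t2 u2 s2 d2 m2 w2 v2 →
      Ev σ sa sw ((x, v2) :: ρ') t u3 s3 d3 m3 w3 v →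
      Ev σ sa sw ρ (.app t1 t2) (u1 || u2 || u3) (s1 ++ s2 ++ s3)
        (d1 ++ d2 ++ d3) (m1 ++ m2 ++ m3) (w1 * w2 * w3) v
  | constApp {ρ t1 t2 u1 u2 s1 s2 d1 d2 m1 m2 w1 w2 c1 c2 c} :
      Ev σ sa sw ρ t1 u1 s1 d1 m1 w1 (.const c1) →
      Ev σ sa sw ρ t2 u2 s2 d2 m2 w2 (.const c2) →
      σ.delta c1 c2 = some c →
      Ev σ sa sw ρ (.app t1 t2) (u1 || u2) (s1 ++ s2)
        (d1 ++ d2) (m1 ++ m2) (w1 * w2) (.const c)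
  | letin {ρ x t1 t2 u1 u2 s1 s2 d1 d2 m1 m2 w1 w2 v1 v} :
      Ev σ sa sw ρ t1 u1 s1 d1 m1 w1 v1 →
      Ev σ sa sw ((x, v1) :: ρ) t2 u2 s2 d2 m2 w2 v →
      Ev σ sa sw ρ (.letin x t1 t2) (u1 || u2) (s1 ++ s2)
        (d1 ++ d2) (m1 ++ m2) (w1 * w2) v
  | iteT {ρ t1 t2 t3 u1 u2 s1 s2 d1 d2 m1 m2 w1 w2 c v} :
      Ev σ sa sw ρ t1 u1 s1 d1 m1 w1 (.const c) →
      σ.truth c = some true →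
      Ev σ sa sw ρ t2 u2 s2 d2 m2 w2 v →
      Ev σ sa sw ρ (.ite t1 t2 t3) (u1 || u2) (s1 ++ s2)
        (d1 ++ d2) (m1 ++ m2) (w1 * w2) v
  | iteF {ρ t1 t2 t3 u1 u3 s1 s3 d1 d3 m1 m3 w1 w3 c v} :
      Ev σ sa sw ρ t1 u1 s1 d1 m1 w1 (.const c) →
      σ.truth c = some false →
      Ev σ sa sw ρ t3 u3 s3 d3 m3 w3 v →
      Ev σ sa sw ρ (.ite t1 t2 t3) (u1 || u3) (s1 ++ s3)
        (d1 ++ d3) (m1 ++ m3) (w1 * w3) v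
  | assume {ρ t u s d m w dv c w'} :
      Ev σ sa sw ρ t u s d m w (.const dv) →
      σ.dens dv c = some w' →
      Ev σ sa sw ρ (.assume t) (sa || u) (s ++ [c]) (d ++ [w']) m (w * w') (.const c)
  | weight {ρ t u s d m w c w'} :
      Ev σ sa sw ρ t u s d m w (.const c) →
      σ.toReal c = some w' →
      Ev σ sa sw ρ (.weight t) (sw || u) s d (m ++ [w']) (w * w') (.const σ.unit)

theorem Ev.det {C : Type} {σ : Sem C} {sa sw : Bool} :
    ∀ {ρ t u1 s1 d1 m1 w1 v1}, Ev σ sa sw ρ t u1 s1 d1 m1 w1 v1 →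
    ∀ {u2 s2 d2 m2 w2 v2} (r1 r2 : List C), Ev σ sa sw ρ t u2 s2 d2 m2 w2 v2 →
    s1 ++ r1 = s2 ++ r2 →
    u1 = u2 ∧ s1 = s2 ∧ d1 = d2 ∧ m1 = m2 ∧ w1 = w2 ∧ v1 = v2 := by
  intro ρ t u1 s1 d1 m1 w1 v1 h1
  induction h1 with
  | var hx =>
    intro _ _ _ _ _ _ r1 r2 h2 hs
    cases h2 with | var hx' => simp_all
  | const =>
    intro _ _ _ _ _ _ r1 r2 h2 hs
    cases h2 with | const => simp_all
  | lam =>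
    intro _ _ _ _ _ _ r1 r2 h2 hs
    cases h2 with | lam => simp_all
  | app e1 e2 e3 ih1 ih2 ih3 =>
    intro _ _ _ _ _ _ r1 r2 h2 hs
    cases h2 with
    | app f1 f2 f3 =>
      simp only [List.append_assoc] at hs
      obtain ⟨hu1, hs1, hd1, hm1, hw1, hv1⟩ := ih1 _ _ f1 hs
      injection hv1 with hx ht hρ
      subst hx; subst ht; subst hρ; subst hs1
      replace hs := List.append_cancel_left hs
      obtain ⟨hu2, hs2, hd2, hm2, hw2, hv2⟩ := ih2 _ _ f2 hs
      subst hv2; subst hs2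
      replace hs := List.append_cancel_left hs
      obtain ⟨hu3, hs3, hd3, hm3, hw3, hv3⟩ := ih3 _ _ f3 hs
      simp_all
    | constApp f1 f2 hδ =>
      simp only [List.append_assoc] at hs
      obtain ⟨_, _, _, _, _, hv1⟩ := ih1 _ _ f1 hs
      cases hv1
  | constApp e1 e2 hδ ih1 ih2 =>
    intro _ _ _ _ _ _ r1 r2 h2 hs
    cases h2 with
    | app f1 f2 f3 =>
      simp only [List.append_assoc] at hs
      obtain ⟨_, _, _, _, _, hv1⟩ := ih1 _ _ f1 hs
      cases hv1
    | constApp f1 f2 hδ' =>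
      simp only [List.append_assoc] at hs
      obtain ⟨hu1, hs1, hd1, hm1, hw1, hv1⟩ := ih1 _ _ f1 hs
      injection hv1 with hc1
      subst hc1; subst hs1
      replace hs := List.append_cancel_left hs
      obtain ⟨hu2, hs2, hd2, hm2, hw2, hv2⟩ := ih2 _ _ f2 hs
      injection hv2 with hc2
      subst hc2
      simp_all
  | letin e1 e2 ih1 ih2 =>
    intro _ _ _ _ _ _ r1 r2 h2 hs
    cases h2 with
    | letin f1 f2 =>
      simp only [List.append_assoc] at hs
      obtain ⟨hu1, hs1, hd1, hm1, hw1, hv1⟩ := ih1 _ _ f1 hs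
      subst hv1; subst hs1
      replace hs := List.append_cancel_left hs
      obtain ⟨hu2, hs2, hd2, hm2, hw2, hv2⟩ := ih2 _ _ f2 hs
      simp_all
  | iteT e1 ht e2 ih1 ih2 =>
    intro _ _ _ _ _ _ r1 r2 h2 hs
    cases h2 with
    | iteT f1 ht' f2 =>
      simp only [List.append_assoc] at hs
      obtain ⟨hu1, hs1, hd1, hm1, hw1, hv1⟩ := ih1 _ _ f1 hs
      injection hv1 with hc; subst hc; subst hs1
      replace hs := List.append_cancel_left hs
      obtain ⟨hu2, hs2, hd2, hm2, hw2, hv2⟩ := ih2 _ _ f2 hs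
      simp_all
    | iteF f1 ht' f3 =>
      simp only [List.append_assoc] at hs
      obtain ⟨_, _, _, _, _, hv1⟩ := ih1 _ _ f1 hs
      injection hv1 with hc; subst hc; simp_all
  | iteF e1 ht e3 ih1 ih3 =>
    intro _ _ _ _ _ _ r1 r2 h2 hs
    cases h2 with
    | iteT f1 ht' f2 =>
      simp only [List.append_assoc] at hs
      obtain ⟨_, _, _, _, _, hv1⟩ := ih1 _ _ f1 hs
      injection hv1 with hc; subst hc; simp_all
    | iteF f1 ht' f3 =>
      simp only [List.append_assoc] at hs
      obtain ⟨hu1, hs1, hd1, hm1, hw1, hv1⟩ := ih1 _ _ f1 hs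
      injection hv1 with hc; subst hc; subst hs1
      replace hs := List.append_cancel_left hs
      obtain ⟨hu3, hs3, hd3, hm3, hw3, hv3⟩ := ih3 _ _ f3 hs
      simp_all
  | assume e hdens ih =>
    intro _ _ _ _ _ _ r1 r2 h2 hs
    cases h2 with
    | assume f hdens' =>
      simp only [List.append_assoc, List.singleton_append] at hs
      obtain ⟨hu, hs1, hd, hm, hw, hv⟩ := ih _ _ f hs
      injection hv with hdv; subst hdv; subst hs1
      replace hs := List.append_cancel_left hs
      injection hs with hc _
      subst hc
      simp_all
  | weight e htr ih =>
    intro _ _ _ _ _ _ r1 r2 h2 hs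
    cases h2 with
    | weight f htr' =>
      obtain ⟨hu, hs1, hd, hm, hw, hv⟩ := ih _ _ f hs
      injection hv with hc; subst hc
      simp_all

/-- the big-step semantics is deterministic given the trace:
two derivations for the same environment, term, and trace `s` agree on the
suspension flag, the weight, and the result value. -/
theorem bigstep_deterministic_given_trace {C : Type} (σ : Sem C) (sa sw : Bool)
    (ρ : Env C) (t : Tm C) (s : List C)
    (u1 u2 : Bool) (d1 d2 m1 m2 : List ℝ) (w1 w2 : ℝ) (v1 v2 : Val C)
    (h1 : Ev σ sa sw ρ t u1 s d1 m1 w1 v1)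
    (h2 : Ev σ sa sw ρ t u2 s d2 m2 w2 v2) :
    u1 = u2 ∧ w1 = w2 ∧ v1 = v2 := by
  obtain ⟨hu, _, _, _, hw, hv⟩ := h1.det [] [] h2 rfl
  exact ⟨hu, hw, hv⟩
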